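/- arXiv:math/9609207 — 2 statements merged into one kernel-verified Lean document; each statement's English description precedes it below -/
import Mathlib

section
/- Let $H = \{z \in \mathbb{C}^3 : |z_i| \le 1\ (i=0,1,2)\}$. Suppose $g, h : H \to \mathbb{C}$ satisfy $|g(z) - (f + f_0 z_0 + f_1 z_1 + f_2 z_2)| \le e$ and $|h(z) - (f' + f'_0 z_0 + f'_1 z_1 + f'_2 z_2)| \le e'$ for all $z \in H$. Write $S = |f_0| + |f_1| + |f_2|$ and $S' = |f'_0| + |f'_1| + |f'_2|$. Then for all $z \in H$, $$|g(z)h(z) - \big(ff' + (f f'_0 + f_0 f') z_0 + (f f'_1 + f_1 f') z_1 + (f f'_2 + f_2 f') z_2\big)| \le (S+e)(S'+e') + |f| e' + |f'| e.$$ -/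
/-!
Write `g z = f + D + r` and `h z = f' + D' + r'` with `D = ∑ fᵢ zᵢ`, `‖D‖ ≤ S`, `‖r‖ ≤ e`, and
likewise for `h`. Then `g z * h z - (f f' + f D' + D f') = (D + r) (D' + r') + f r' + r f'`,
and the triangle inequality bounds the three terms by `(S + e) (S' + e')`, `‖f‖ e'` and `‖f'‖ e`.
-/

theorem norm_sum_mul_le_sum_norm {ι R : Type*} [SeminormedRing R] (s : Finset ι) (a z : ι → R)
    (hz : ∀ i ∈ s, ‖z i‖ ≤ 1) : ‖∑ i ∈ s, a i * z i‖ ≤ ∑ i ∈ s, ‖a i‖ :=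
  calc ‖∑ i ∈ s, a i * z i‖ ≤ ∑ i ∈ s, ‖a i * z i‖ := norm_sum_le _ _
    _ ≤ ∑ i ∈ s, ‖a i‖ := Finset.sum_le_sum fun i hi =>
      (norm_mul_le _ _).trans (mul_le_of_le_one_right (norm_nonneg _) (hz i hi))

theorem norm_mul_sub_leibniz_le {R : Type*} [SeminormedRing R] {x y c c' d d' : R}
    {S S' e e' : ℝ} (hx : ‖x - (c + d)‖ ≤ e) (hy : ‖y - (c' + d')‖ ≤ e') (hd : ‖d‖ ≤ S)
    (hd' : ‖d'‖ ≤ S') :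
    ‖x * y - (c * c' + (c * d' + d * c'))‖ ≤ (S + e) * (S' + e') + ‖c‖ * e' + ‖c'‖ * e := by
  set r := x - (c + d)
  set r' := y - (c' + d')
  have hsplit : x * y - (c * c' + (c * d' + d * c')) = (d + r) * (d' + r') + c * r' + r * c' := by
    simp only [r, r']
    noncomm_ring
  have hdr : ‖d + r‖ ≤ S + e := (norm_add_le _ _).trans (add_le_add hd hx)
  have hdr' : ‖d' + r'‖ ≤ S' + e' := (norm_add_le _ _).trans (add_le_add hd' hy)
  rw [hsplit]
  calc ‖(d + r) * (d' + r') + c * r' + r * c'‖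
      ≤ ‖d + r‖ * ‖d' + r'‖ + ‖c‖ * ‖r'‖ + ‖r‖ * ‖c'‖ :=
        norm_add₃_le.trans (add_le_add_three (norm_mul_le _ _) (norm_mul_le _ _)
          (norm_mul_le _ _))
    _ ≤ (S + e) * (S' + e') + ‖c‖ * e' + e * ‖c'‖ := by
        gcongr
        exact (norm_nonneg _).trans hdr
    _ = (S + e) * (S' + e') + ‖c‖ * e' + ‖c'‖ * e := by ring

theorem acj_mul_correct (f f0 f1 f2 f' f0' f1' f2' : ℂ) (e e' : ℝ)
    (g h : (Fin 3 → ℂ) → ℂ)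
    (hg : ∀ z : Fin 3 → ℂ, (∀ i, ‖z i‖ ≤ 1) →
      ‖g z - (f + f0 * z 0 + f1 * z 1 + f2 * z 2)‖ ≤ e)
    (hh : ∀ z : Fin 3 → ℂ, (∀ i, ‖z i‖ ≤ 1) →
      ‖h z - (f' + f0' * z 0 + f1' * z 1 + f2' * z 2)‖ ≤ e') :
    ∀ z : Fin 3 → ℂ, (∀ i, ‖z i‖ ≤ 1) →
      ‖g z * h z -
        (f * f' + (f * f0' + f0 * f') * z 0 + (f * f1' + f1 * f') * z 1 +
          (f * f2' + f2 * f') * z 2)‖ ≤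
      (‖f0‖ + ‖f1‖ + ‖f2‖ + e) *
          (‖f0'‖ + ‖f1'‖ + ‖f2'‖ + e') +
        ‖f‖ * e' + ‖f'‖ * e := by
  intro z hz
  have hlin : ∀ a0 a1 a2 : ℂ, ‖a0 * z 0 + a1 * z 1 + a2 * z 2‖ ≤ ‖a0‖ + ‖a1‖ + ‖a2‖ := by
    intro a0 a1 a2
    simpa [Fin.sum_univ_three] using
      norm_sum_mul_le_sum_norm Finset.univ ![a0, a1, a2] z fun i _ => hz i
  have hx : ‖g z - (f + (f0 * z 0 + f1 * z 1 + f2 * z 2))‖ ≤ e := by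
    simpa only [← add_assoc] using hg z hz
  have hy : ‖h z - (f' + (f0' * z 0 + f1' * z 1 + f2' * z 2))‖ ≤ e' := by
    simpa only [← add_assoc] using hh z hz
  have hleibniz : f * f' + (f * f0' + f0 * f') * z 0 + (f * f1' + f1 * f') * z 1 +
      (f * f2' + f2 * f') * z 2 =
      f * f' +
        (f * (f0' * z 0 + f1' * z 1 + f2' * z 2) + (f0 * z 0 + f1 * z 1 + f2 * z 2) * f') := by
    ring
  rw [hleibniz]
  exact norm_mul_sub_leibniz_le hx hy (hlin f0 f1 f2) (hlin f0' f1' f2')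
end

section
/- Let $x \in \mathbb{R}$ with $0 \le x < 1$, and let $t \in \mathbb{C}$ with $|t| \le x$. Then $$\left|\sqrt{1+t} - \left(1 + \frac{t}{2}\right)\right| \le 1 - \frac{x}{2} - \sqrt{1-x},$$ where $\sqrt{\cdot}$ denotes the principal branch of the complex square root. -/
/-!
With `w = √(1 + t)` one has `w - (1 + t/2) = -(w - 1)²/2` and `(w - 1)(w + 1) = t`.
The principal root satisfies `Re w ≥ √(Re (1 + t)) ≥ √(1 - x) =: s`, so `‖w + 1‖ ≥ 1 + s` and
`‖w - 1‖ ≤ x / (1 + s) = 1 - s`. Squaring gives the error bound `(1 - s)²/2 = 1 - x/2 - s`.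
-/

namespace Complex

lemma cpow_inv_two_sq (z : ℂ) : (z ^ (2⁻¹ : ℂ)) ^ 2 = z := by
  exact_mod_cast cpow_nat_inv_pow z two_ne_zero

lemma sqrt_re_le_re_cpow_inv_two (z : ℂ) : √z.re ≤ (z ^ (2⁻¹ : ℂ)).re := by
  rw [cpow_inv_two_re]
  exact Real.sqrt_le_sqrt (by linarith [re_le_norm z])

end Complex

section SquareRootOfOnePlus

variable {w t : ℂ}

lemma norm_sub_one_add_half_eq_of_sq_eq (hw : w ^ 2 = 1 + t) :
    ‖w - (1 + t / 2)‖ = ‖w - 1‖ ^ 2 / 2 := by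
  have hid : w - (1 + t / 2) = -(w - 1) ^ 2 / 2 := by
    rw [show t = w ^ 2 - 1 by rw [hw]; ring]
    ring
  rw [hid, norm_div, norm_neg, norm_pow, Complex.norm_two]

lemma norm_sub_one_le_of_sq_eq {s : ℝ} (hw : w ^ 2 = 1 + t) (hs : 0 ≤ s) (hsw : s ≤ w.re) :
    ‖w - 1‖ ≤ ‖t‖ / (1 + s) := by
  have hprod : ‖w - 1‖ * ‖w + 1‖ = ‖t‖ := by
    rw [← norm_mul, show (w - 1) * (w + 1) = w ^ 2 - 1 by ring, hw, add_sub_cancel_left]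
  have hplus : 1 + s ≤ ‖w + 1‖ := by
    have := Complex.re_le_norm (w + 1)
    rw [Complex.add_re, Complex.one_re] at this
    linarith
  rw [le_div_iff₀ (by linarith), ← hprod]
  exact mul_le_mul_of_nonneg_left hplus (norm_nonneg _)

end SquareRootOfOnePlus

theorem sqrt_linearization_error_general (x : ℝ) (hx1 : x < 1)
    (t : ℂ) (ht : ‖t‖ ≤ x) :
    ‖(1 + t) ^ ((1 : ℂ) / 2) - (1 + t / 2)‖ ≤
      1 - x / 2 - Real.sqrt (1 - x) := by
  rw [one_div]
  set s := √(1 - x)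
  set w := (1 + t) ^ (2⁻¹ : ℂ)
  have hw : w ^ 2 = 1 + t := Complex.cpow_inv_two_sq _
  have hs : 0 ≤ s := Real.sqrt_nonneg _
  have hs_sq : s ^ 2 = 1 - x := Real.sq_sqrt (by linarith)
  have hsw : s ≤ w.re := calc
    s ≤ √(1 + t).re := by
      refine Real.sqrt_le_sqrt ?_
      linarith [Complex.add_re 1 t, Complex.one_re, neg_abs_le t.re, Complex.abs_re_le_norm t]
    _ ≤ w.re := Complex.sqrt_re_le_re_cpow_inv_two _
  have hdist : ‖w - 1‖ ≤ 1 - s := by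
    calc ‖w - 1‖ ≤ ‖t‖ / (1 + s) := norm_sub_one_le_of_sq_eq hw hs hsw
      _ ≤ x / (1 + s) := by gcongr
      _ = 1 - s := by field_simp; linear_combination hs_sq
  calc ‖w - (1 + t / 2)‖ = ‖w - 1‖ ^ 2 / 2 := norm_sub_one_add_half_eq_of_sq_eq hw
    _ ≤ (1 - s) ^ 2 / 2 := by gcongr
    _ = 1 - x / 2 - s := by linear_combination hs_sq / 2

theorem sqrt_linearization_error (x : ℝ) (hx0 : 0 ≤ x) (hx1 : x < 1)
    (t : ℂ) (ht : ‖t‖ ≤ x) :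
    ‖(1 + t) ^ ((1 : ℂ) / 2) - (1 + t / 2)‖ ≤
      1 - x / 2 - Real.sqrt (1 - x) :=
  sqrt_linearization_error_general x hx1 t ht
end
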